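/- Let G be a finite simple graph on a nonempty vertex set V. Then the maximum of C(S) over all subsets S ⊆ V equals the maximum of C(S) over all subsets S ⊆ V whose induced subgraph G[S] is connected. In particular, the problem of finding a set of vertices with maximum cohesion is equivalent to that of finding a connected set of vertices with maximum cohesion. -/

import Mathlib

open Finset
open scoped Classical

/-- The set of triangles of a finite simple graph `G`: 3-element vertex sets
that are pairwise adjacent. -/
noncomputable def triangles {V : Type*} [Fintype V] (G : SimpleGraph V) : Finset (Finset V) :=
  Finset.univ.filter (fun t => t.card = 3 ∧ (t : Set V).Pairwise G.Adj)

/-- `triIn G S` is the number of triangles of `G` with all three vertices in `S`. -/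
noncomputable def triIn {V : Type*} [Fintype V] (G : SimpleGraph V) (S : Finset V) : ℕ :=
  ((triangles G).filter (fun t => t ⊆ S)).card

/-- `triOut G S` is the number of triangles of `G` with exactly two vertices in `S`. -/
noncomputable def triOut {V : Type*} [Fintype V] (G : SimpleGraph V) (S : Finset V) : ℕ :=
  ((triangles G).filter (fun t => (t ∩ S).card = 2)).card

/-- The cohesion of a set of vertices `S` in `G`:
`C(S) = i(S)² / (choose(|S|,3) · (i(S) + o(S)))`, which is `0` when the
denominator vanishes (division by zero in `ℝ`). -/
noncomputable def cohesion {V : Type*} [Fintype V] (G : SimpleGraph V) (S : Finset V) : ℝ :=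
  (triIn G S : ℝ) ^ 2 / ((S.card.choose 3 : ℝ) * ((triIn G S : ℝ) + (triOut G S : ℝ)))

/-! If `S = A ∪ B` with no edges between `A` and `B`, every triangle meeting `S` meets only one
side, so `i` and `o` are additive over the split, while `choose(|S|, 3)` is superadditive. With
`x = max (C A) (C B)` we have `i(A)² ≤ x·N(A)·d(A)` and likewise for `B` (`N = choose(|·|,3)`,
`d = i + o`), and Cauchy–Schwarz gives `(i(A) + i(B))² ≤ x·(N(A) + N(B))·(d(A) + d(B)) ≤ x·N(S)·d(S)`,
i.e. `C S ≤ x`. Splitting a disconnected set into two such halves, induction on `|S|` yields a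
connected set of at least the same cohesion. -/

namespace Nat

theorem choose_add_choose_le_choose_add (a b : ℕ) {k : ℕ} (hk : k ≠ 0) :
    a.choose k + b.choose k ≤ (a + b).choose k := by
  have hsub : {(k, 0), (0, k)} ⊆ antidiagonal k := by
    simp [insert_subset_iff]
  calc a.choose k + b.choose k
      = ∑ ij ∈ {(k, 0), (0, k)}, a.choose ij.1 * b.choose ij.2 := by
        rw [sum_pair (by simp [hk])]; simp
    _ ≤ (a + b).choose k := by
        rw [add_choose_eq]; exact sum_le_sum_of_subset hsub

end Nat

theorem add_sq_le_add_mul_add {R : Type*} [CommSemiring R] [LinearOrder R]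
    [IsStrictOrderedRing R] [ExistsAddOfLE R] {a₁ a₂ u₁ u₂ v₁ v₂ : R}
    (hu₁ : 0 ≤ u₁) (hu₂ : 0 ≤ u₂) (hv₁ : 0 ≤ v₁) (hv₂ : 0 ≤ v₂)
    (h₁ : a₁ ^ 2 ≤ u₁ * v₁) (h₂ : a₂ ^ 2 ≤ u₂ * v₂) :
    (a₁ + a₂) ^ 2 ≤ (u₁ + u₂) * (v₁ + v₂) := by
  simpa [Fin.sum_univ_two] using sum_sq_le_sum_mul_sum_of_sq_le_mul univ
    (r := ![a₁, a₂]) (f := ![u₁, u₂]) (g := ![v₁, v₂])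
    (by simp [Fin.forall_fin_two, hu₁, hu₂]) (by simp [Fin.forall_fin_two, hv₁, hv₂])
    (by simp [Fin.forall_fin_two, h₁, h₂])

section
variable {V : Type*} (G : SimpleGraph V)

theorem exists_separation_of_not_preconnected {S : Finset V}
    (h : ¬(G.induce (S : Set V)).Preconnected) :
    ∃ A B : Finset V, Disjoint A B ∧ A ∪ B = S ∧ A.Nonempty ∧ B.Nonempty ∧
      ∀ a ∈ A, ∀ b ∈ B, ¬G.Adj a b := by
  obtain ⟨u, w, huw⟩ : ∃ u w, ¬(G.induce (S : Set V)).Reachable u w := by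
    simpa [SimpleGraph.Preconnected] using h
  set A := {a ∈ S | ∃ ha : a ∈ S, (G.induce (S : Set V)).Reachable u ⟨a, ha⟩}
  refine ⟨A, S \ A, disjoint_sdiff, union_sdiff_of_subset (filter_subset _ _),
    ⟨u, mem_filter.2 ⟨u.2, u.2, .rfl⟩⟩, ⟨w, mem_sdiff.2 ⟨w.2, fun hw => ?_⟩⟩, ?_⟩
  · obtain ⟨_, _, hr⟩ := mem_filter.1 hw
    exact huw hr
  · intro a ha b hb hab
    obtain ⟨hbS, hbA⟩ := mem_sdiff.1 hb
    obtain ⟨_, haS, hr⟩ := mem_filter.1 ha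
    have hab' : (G.induce (S : Set V)).Adj ⟨a, haS⟩ ⟨b, hbS⟩ := hab
    exact hbA <| mem_filter.2 ⟨hbS, hbS, hr.trans hab'.reachable⟩

variable [Fintype V]

theorem mem_triangles {t : Finset V} :
    t ∈ triangles G ↔ t.card = 3 ∧ (t : Set V).Pairwise G.Adj := by
  simp [triangles]

theorem inter_eq_empty_or_of_mem_triangles {A B t : Finset V} (hAB : Disjoint A B)
    (hsep : ∀ a ∈ A, ∀ b ∈ B, ¬G.Adj a b) (ht : t ∈ triangles G) :
    t ∩ A = ∅ ∨ t ∩ B = ∅ := by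
  by_contra! h
  obtain ⟨⟨a, ha⟩, ⟨b, hb⟩⟩ := h
  rw [mem_inter] at ha hb
  exact hsep a ha.2 b hb.2 <| ((mem_triangles G).1 ht).2 ha.1 hb.1 <|
    fun hab => disjoint_left.1 hAB ha.2 (hab ▸ hb.2)

/-- `triIn` and `triOut` count triangles `t` by a condition `p t s` on their trace `s = t ∩ S`:
`s = t` and `#s = 2` respectively. -/
theorem card_filter_triangles_inter_union {A B : Finset V} (hAB : Disjoint A B)
    (hsep : ∀ a ∈ A, ∀ b ∈ B, ¬G.Adj a b) (p : Finset V → Finset V → Prop)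
    [∀ t s, Decidable (p t s)] (hp : ∀ t ∈ triangles G, ¬p t ∅) :
    #{t ∈ triangles G | p t (t ∩ (A ∪ B))} =
      #{t ∈ triangles G | p t (t ∩ A)} + #{t ∈ triangles G | p t (t ∩ B)} := by
  rw [← card_union_of_disjoint, ← filter_or]
  · refine congrArg card (filter_congr fun t ht => ?_)
    rw [inter_union_distrib_left]
    rcases inter_eq_empty_or_of_mem_triangles G hAB hsep ht with h | h <;>
      simp [h, hp t ht]
  · refine disjoint_filter.2 fun t ht hA hB => ?_
    rcases inter_eq_empty_or_of_mem_triangles G hAB hsep ht with h | h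
    · exact hp t ht (h ▸ hA)
    · exact hp t ht (h ▸ hB)

theorem triIn_union {A B : Finset V} (hAB : Disjoint A B)
    (hsep : ∀ a ∈ A, ∀ b ∈ B, ¬G.Adj a b) :
    triIn G (A ∪ B) = triIn G A + triIn G B := by
  have hp : ∀ t ∈ triangles G, (∅ : Finset V) ≠ t := fun t ht h => by
    simpa [← h] using ((mem_triangles G).1 ht).1
  simpa only [triIn, inter_eq_left] using
    card_filter_triangles_inter_union G hAB hsep (fun t s => s = t) hp

theorem triOut_union {A B : Finset V} (hAB : Disjoint A B)
    (hsep : ∀ a ∈ A, ∀ b ∈ B, ¬G.Adj a b) :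
    triOut G (A ∪ B) = triOut G A + triOut G B :=
  card_filter_triangles_inter_union G hAB hsep (fun _ s => s.card = 2) (by simp)

theorem triIn_le_choose (S : Finset V) : triIn G S ≤ S.card.choose 3 := by
  rw [← card_powersetCard]
  refine card_le_card fun t ht => ?_
  rw [mem_filter, mem_triangles] at ht
  exact mem_powersetCard.2 ⟨ht.2, ht.1.1⟩

theorem cohesion_nonneg (S : Finset V) : 0 ≤ cohesion G S := by
  unfold cohesion; positivity

theorem sq_triIn_le_cohesion_mul (S : Finset V) :
    (triIn G S : ℝ) ^ 2 ≤
      cohesion G S * ((S.card.choose 3 : ℝ) * ((triIn G S : ℝ) + (triOut G S : ℝ))) := by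
  by_cases hD : (S.card.choose 3 : ℝ) * ((triIn G S : ℝ) + (triOut G S : ℝ)) = 0
  · have hle : (triIn G S : ℝ) ^ 2 ≤
        (S.card.choose 3 : ℝ) * ((triIn G S : ℝ) + (triOut G S : ℝ)) := by
      rw [sq]
      gcongr
      · exact_mod_cast triIn_le_choose G S
      · exact le_add_of_nonneg_right (Nat.cast_nonneg _)
    rw [hD, mul_zero]
    exact hD ▸ hle
  · exact (div_mul_cancel₀ _ hD).ge

theorem cohesion_union_le_max {A B : Finset V} (hAB : Disjoint A B)
    (hsep : ∀ a ∈ A, ∀ b ∈ B, ¬G.Adj a b) :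
    cohesion G (A ∪ B) ≤ max (cohesion G A) (cohesion G B) := by
  set x := max (cohesion G A) (cohesion G B)
  have hx : 0 ≤ x := (cohesion_nonneg G A).trans (le_max_left _ _)
  have bound : ∀ S, cohesion G S ≤ x → (triIn G S : ℝ) ^ 2 ≤
      (x * S.card.choose 3) * ((triIn G S : ℝ) + (triOut G S : ℝ)) := fun S hS => by
    calc (triIn G S : ℝ) ^ 2
        ≤ cohesion G S * ((S.card.choose 3 : ℝ) * ((triIn G S : ℝ) + (triOut G S : ℝ))) :=
          sq_triIn_le_cohesion_mul G S
      _ ≤ x * ((S.card.choose 3 : ℝ) * ((triIn G S : ℝ) + (triOut G S : ℝ))) := by gcongr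
      _ = _ := by ring
  have hchoose : (A.card.choose 3 : ℝ) + B.card.choose 3 ≤ (A ∪ B).card.choose 3 := by
    rw [card_union_of_disjoint hAB]
    exact_mod_cast Nat.choose_add_choose_le_choose_add _ _ three_ne_zero
  rw [cohesion, triIn_union G hAB hsep, triOut_union G hAB hsep]
  push_cast
  refine div_le_of_le_mul₀ (by positivity) hx ?_
  calc ((triIn G A : ℝ) + triIn G B) ^ 2
      ≤ (x * A.card.choose 3 + x * B.card.choose 3) *
          (((triIn G A : ℝ) + triOut G A) + ((triIn G B : ℝ) + triOut G B)) :=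
        add_sq_le_add_mul_add (by positivity) (by positivity) (by positivity) (by positivity)
          (bound A (le_max_left _ _)) (bound B (le_max_right _ _))
    _ ≤ x * ((A ∪ B).card.choose 3 *
          (((triIn G A : ℝ) + triOut G A) + ((triIn G B : ℝ) + triOut G B))) := by
        rw [← mul_add, mul_assoc]; gcongr
    _ = _ := by ring

theorem exists_connected_cohesion_le [Nonempty V] (S : Finset V) :
    ∃ T : Finset V, (G.induce (T : Set V)).Connected ∧ cohesion G S ≤ cohesion G T := by
  induction S using Finset.strongInduction with
  | H S ih =>
  by_cases hconn : (G.induce (S : Set V)).Connected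
  · exact ⟨S, hconn, le_rfl⟩
  obtain rfl | hS := S.eq_empty_or_nonempty
  · obtain ⟨v⟩ := ‹Nonempty V›
    refine ⟨{v}, ?_, by simpa [cohesion] using cohesion_nonneg G {v}⟩
    rw [coe_singleton, SimpleGraph.induce_singleton_eq_top]
    exact SimpleGraph.connected_top
  have hpre : ¬(G.induce (S : Set V)).Preconnected := fun h =>
    hconn ((SimpleGraph.connected_iff _).2 ⟨h, hS.coe_sort⟩)
  obtain ⟨A, B, hAB, rfl, hA, hB, hsep⟩ := exists_separation_of_not_preconnected G hpre
  obtain ⟨TA, hTA, hA_le⟩ := ih A <| left_lt_sup.2 fun h => hB.ne_empty (disjoint_self.1 (hAB.mono_left h))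
  obtain ⟨TB, hTB, hB_le⟩ := ih B <| right_lt_sup.2 fun h => hA.ne_empty (disjoint_self.1 (hAB.mono_right h))
  have hmax := cohesion_union_le_max G hAB hsep
  rcases le_total (cohesion G TA) (cohesion G TB) with h | h
  · exact ⟨TB, hTB, hmax.trans (max_le (hA_le.trans h) hB_le)⟩
  · exact ⟨TA, hTA, hmax.trans (max_le hA_le (hB_le.trans h))⟩

end

theorem max_cohesion_eq_max_connected_cohesion {V : Type*} [Fintype V] [Nonempty V]
    (G : SimpleGraph V) :
    (⨆ S : Finset V, cohesion G S) =
      ⨆ S : {S : Finset V // (G.induce (S : Set V)).Connected}, cohesion G (S : Finset V) := by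
  apply le_antisymm
  · refine ciSup_le fun S => ?_
    obtain ⟨T, hT, hST⟩ := exists_connected_cohesion_le G S
    exact hST.trans (le_ciSup (f := fun S : {S : Finset V // (G.induce (S : Set V)).Connected} =>
      cohesion G S) (Set.finite_range _).bddAbove ⟨T, hT⟩)
  · exact Real.iSup_le (fun S => le_ciSup (Set.finite_range _).bddAbove (S : Finset V))
      (Real.iSup_nonneg (cohesion_nonneg G))
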